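/- Controlled growth of averaged matrices: Let n ≥ 3, d ≥ 1 and 1 < p < ∞. If V is a matrix weight on ℝⁿ belonging to 𝓑_p with constant C_V, then for every x ∈ ℝⁿ, all 0 < r < R < ∞, and every e ∈ ℝᵈ, ⟨Ψ(x,r;V)e,e⟩ ≤ C_V (r/R)^{2−n/p} ⟨Ψ(x,R;V)e,e⟩; equivalently, Ψ(x,r;V) ≤ C_V (r/R)^{2−n/p} Ψ(x,R;V) in the positive semidefinite order. -/

import Mathlib

open MeasureTheory
open scoped ComplexOrder

noncomputable section

/-- The open cube in `ℝⁿ` centered at `x` with half side length `r` (side length `2r`). -/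
def cube {n : ℕ} (x : Fin n → ℝ) (r : ℝ) : Set (Fin n → ℝ) :=
  {y | ∀ i, |y i - x i| < r}

/-- Entrywise integral of a real matrix-valued function over a set. -/
def matInt {n d : ℕ} (V : (Fin n → ℝ) → Matrix (Fin d) (Fin d) ℝ)
    (s : Set (Fin n → ℝ)) : Matrix (Fin d) (Fin d) ℝ :=
  Matrix.of fun i j => ∫ y in s, V y i j

/-- Entrywise average of a real matrix-valued function over a set. -/
def matAvg {n d : ℕ} (V : (Fin n → ℝ) → Matrix (Fin d) (Fin d) ℝ)
    (s : Set (Fin n → ℝ)) : Matrix (Fin d) (Fin d) ℝ :=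
  Matrix.of fun i j => ⨍ y in s, V y i j

/-- The quadratic form `⟨A e, e⟩`. -/
def qf {d : ℕ} (A : Matrix (Fin d) (Fin d) ℝ) (e : Fin d → ℝ) : ℝ :=
  dotProduct e (A.mulVec e)

/-- Squared Euclidean norm of a real vector. -/
def vnormSq {d : ℕ} (e : Fin d → ℝ) : ℝ := ∑ i, e i ^ 2

/-- The Euclidean operator norm of a real square matrix (its largest singular value). -/
def matOpNorm {d : ℕ} (A : Matrix (Fin d) (Fin d) ℝ) : ℝ :=
  sSup {t : ℝ | ∃ e : Fin d → ℝ, vnormSq e = 1 ∧ t = Real.sqrt (vnormSq (A.mulVec e))}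

/-- `V` is a matrix weight: measurable, a.e. symmetric positive semidefinite, and with
locally integrable operator norm. -/
def IsMatrixWeight {n d : ℕ} (V : (Fin n → ℝ) → Matrix (Fin d) (Fin d) ℝ) : Prop :=
  (∀ i j, Measurable fun x => V x i j) ∧
  (∀ᵐ (x : Fin n → ℝ) ∂volume, (V x).PosSemidef) ∧
  ∀ (x : Fin n → ℝ) (r : ℝ), 0 < r → IntegrableOn (fun y => matOpNorm (V y)) (cube x r)

/-- The matrix reverse Hölder class `𝓑_p` with constant `C`. -/
def MemBp {n d : ℕ} (p C : ℝ) (V : (Fin n → ℝ) → Matrix (Fin d) (Fin d) ℝ) : Prop :=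
  (∀ (x : Fin n → ℝ) (r : ℝ), 0 < r →
    IntegrableOn (fun y => matOpNorm (V y) ^ p) (cube x r)) ∧
  ∀ (x : Fin n → ℝ) (r : ℝ), 0 < r → ∀ e : Fin d → ℝ,
    (⨍ y in cube x r, qf (V y) e ^ p) ^ (1 / p) ≤ C * qf (matAvg V (cube x r)) e

/-- The scalar reverse Hölder class `B_p` with constant `C`. -/
def MemBpScalar {n : ℕ} (p C : ℝ) (v : (Fin n → ℝ) → ℝ) : Prop :=
  (∀ (x : Fin n → ℝ) (r : ℝ), 0 < r → IntegrableOn (fun y => v y ^ p) (cube x r)) ∧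
  ∀ (x : Fin n → ℝ) (r : ℝ), 0 < r →
    (⨍ y in cube x r, v y ^ p) ^ (1 / p) ≤ C * ⨍ y in cube x r, v y

/-- The averaged matrix `Ψ(x,r;V) = r^{2-n} ∫_{Q(x,r)} V`. -/
def Psi {n d : ℕ} (x : Fin n → ℝ) (r : ℝ)
    (V : (Fin n → ℝ) → Matrix (Fin d) (Fin d) ℝ) : Matrix (Fin d) (Fin d) ℝ :=
  r ^ ((2 : ℝ) - n) • matInt V (cube x r)

/-- The nondegeneracy class `ND`. -/
def MemND {n d : ℕ} (V : (Fin n → ℝ) → Matrix (Fin d) (Fin d) ℝ) : Prop :=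
  ∀ E : Set (Fin n → ℝ), MeasurableSet E → 0 < volume E → (matInt V E).PosDef

/-- The set of radii used to define the lower auxiliary function. -/
def lowerSet {n d : ℕ} (V : (Fin n → ℝ) → Matrix (Fin d) (Fin d) ℝ)
    (x : Fin n → ℝ) : Set ℝ :=
  {r : ℝ | 0 < r ∧ ∃ e : Fin d → ℝ, vnormSq e = 1 ∧ qf (Psi x r V) e ≤ 1}

/-- The lower auxiliary function `m̲(x,V)`. -/
def mLower {n d : ℕ} (V : (Fin n → ℝ) → Matrix (Fin d) (Fin d) ℝ) (x : Fin n → ℝ) : ℝ :=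
  (sSup (lowerSet V x))⁻¹

/-- The set of radii used to define the upper auxiliary function. -/
def upperSet {n d : ℕ} (V : (Fin n → ℝ) → Matrix (Fin d) (Fin d) ℝ)
    (x : Fin n → ℝ) : Set ℝ :=
  {r : ℝ | 0 < r ∧ matOpNorm (Psi x r V) ≤ 1}

/-- The upper auxiliary function `m̄(x,V)`. -/
def mUpper {n d : ℕ} (V : (Fin n → ℝ) → Matrix (Fin d) (Fin d) ℝ) (x : Fin n → ℝ) : ℝ :=
  (sSup (upperSet V x))⁻¹

/-- The set of radii used to define the scalar auxiliary function. -/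
def scalSet {n : ℕ} (v : (Fin n → ℝ) → ℝ) (x : Fin n → ℝ) : Set ℝ :=
  {r : ℝ | 0 < r ∧ r ^ ((2 : ℝ) - n) * ∫ y in cube x r, v y ≤ 1}

/-- The scalar auxiliary function `m(x,v)`. -/
def mScal {n : ℕ} (v : (Fin n → ℝ) → ℝ) (x : Fin n → ℝ) : ℝ :=
  (sSup (scalSet v x))⁻¹

/-- The positive semidefinite square root of a matrix (junk value `0` off the
positive semidefinite matrices). -/
def msqrt {d : ℕ} (A : Matrix (Fin d) (Fin d) ℝ) : Matrix (Fin d) (Fin d) ℝ :=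
  @dite _ A.PosSemidef (Classical.dec _) (fun h => h.1.eigenvectorUnitary.1 *
    Matrix.diagonal ((↑) ∘ Real.sqrt ∘ h.1.eigenvalues) *
    (star h.1.eigenvectorUnitary : Matrix (Fin d) (Fin d) ℝ)) fun _ => 0

/-- The noncommutativity class `NC` with constant `N`. -/
def MemNC {n d : ℕ} (N : ℝ) (V : (Fin n → ℝ) → Matrix (Fin d) (Fin d) ℝ) : Prop :=
  ∀ (x : Fin n → ℝ) (e : Fin d → ℝ),
    N * vnormSq e ≤
      ∫ y in cube x (mLower V x)⁻¹,
        qf (msqrt (V y) * (matInt V (cube x (mLower V x)⁻¹))⁻¹ * msqrt (V y)) e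

/-- The matrix `𝓐_∞` class. -/
def MemAinf {n d : ℕ} (V : (Fin n → ℝ) → Matrix (Fin d) (Fin d) ℝ) : Prop :=
  ∀ ε : ℝ, 0 < ε → ∃ δ : ℝ, 0 < δ ∧ ∀ (x : Fin n → ℝ) (r : ℝ), 0 < r →
    ENNReal.ofReal (1 - ε) * volume (cube x r) ≤
      volume {y ∈ cube x r | (V y - δ • matAvg V (cube x r)).PosSemidef}

/-- The smallest eigenvalue of a symmetric matrix (as the infimum of the Rayleigh
quotient over the unit sphere). -/
def lam1 {d : ℕ} (A : Matrix (Fin d) (Fin d) ℝ) : ℝ :=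
  sInf {t : ℝ | ∃ e : Fin d → ℝ, vnormSq e = 1 ∧ t = qf A e}

/-- Squared Frobenius norm of the Jacobian matrix `Du(x)`. -/
def jacFrobSq {n d : ℕ} (u : (Fin n → ℝ) → Fin d → ℝ) (x : Fin n → ℝ) : ℝ :=
  ∑ j, ∑ i, (fderiv ℝ u x (Pi.single i 1) j) ^ 2

/-! ### Complex (Hermitian) versions -/

/-- The (real-valued) quadratic form `⟨A e, e⟩` of a Hermitian matrix. -/
def qfC {d : ℕ} (A : Matrix (Fin d) (Fin d) ℂ) (e : Fin d → ℂ) : ℝ :=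
  (dotProduct (star e) (A.mulVec e)).re

/-- Squared Euclidean norm of a complex vector. -/
def vnormSqC {d : ℕ} (e : Fin d → ℂ) : ℝ := ∑ i, Complex.normSq (e i)

/-- Entrywise integral of a complex matrix-valued function over a set. -/
def matIntC {n d : ℕ} (V : (Fin n → ℝ) → Matrix (Fin d) (Fin d) ℂ)
    (s : Set (Fin n → ℝ)) : Matrix (Fin d) (Fin d) ℂ :=
  Matrix.of fun i j => ∫ y in s, V y i j

/-- Entrywise average of a complex matrix-valued function over a set. -/
def matAvgC {n d : ℕ} (V : (Fin n → ℝ) → Matrix (Fin d) (Fin d) ℂ)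
    (s : Set (Fin n → ℝ)) : Matrix (Fin d) (Fin d) ℂ :=
  Matrix.of fun i j => ⨍ y in s, V y i j

/-- The Euclidean operator norm of a complex square matrix. -/
def matOpNormC {d : ℕ} (A : Matrix (Fin d) (Fin d) ℂ) : ℝ :=
  sSup {t : ℝ | ∃ e : Fin d → ℂ, vnormSqC e = 1 ∧ t = Real.sqrt (vnormSqC (A.mulVec e))}

/-- `V` is a Hermitian matrix weight. -/
def IsHermWeight {n d : ℕ} (V : (Fin n → ℝ) → Matrix (Fin d) (Fin d) ℂ) : Prop :=
  (∀ i j, Measurable fun x => V x i j) ∧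
  (∀ᵐ (x : Fin n → ℝ) ∂volume, (V x).PosSemidef) ∧
  ∀ (x : Fin n → ℝ) (r : ℝ), 0 < r → IntegrableOn (fun y => matOpNormC (V y)) (cube x r)

/-- The nondegeneracy class `ND` for Hermitian weights. -/
def MemNDC {n d : ℕ} (V : (Fin n → ℝ) → Matrix (Fin d) (Fin d) ℂ) : Prop :=
  ∀ E : Set (Fin n → ℝ), MeasurableSet E → 0 < volume E → (matIntC V E).PosDef

/-- The matrix `𝓐_∞` class for Hermitian weights. -/
def MemAinfC {n d : ℕ} (V : (Fin n → ℝ) → Matrix (Fin d) (Fin d) ℂ) : Prop :=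
  ∀ ε : ℝ, 0 < ε → ∃ δ : ℝ, 0 < δ ∧ ∀ (x : Fin n → ℝ) (r : ℝ), 0 < r →
    ENNReal.ofReal (1 - ε) * volume (cube x r) ≤
      volume {y ∈ cube x r | (V y - δ • matAvgC V (cube x r)).PosSemidef}

/-- The geometric average `exp(⨍_s ln w)` of a nonnegative function, with the
conventions `ln 0 = -∞` and `exp (-∞) = 0`. -/
def geomMean {n : ℕ} (w : (Fin n → ℝ) → ℝ) (s : Set (Fin n → ℝ)) : ℝ :=
  @ite _ ((∀ᵐ y ∂(volume.restrict s), 0 < w y) ∧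
      IntegrableOn (fun y => Real.log (w y)) s) (Classical.dec _)
    (Real.exp (⨍ y in s, Real.log (w y))) 0

/-- The scalar `A_∞` class. -/
def ScalarAinf {n : ℕ} (w : (Fin n → ℝ) → ℝ) : Prop :=
  ∀ ε : ℝ, 0 < ε → ∃ δ : ℝ, 0 < δ ∧ ∀ (x : Fin n → ℝ) (r : ℝ), 0 < r →
    ENNReal.ofReal (1 - ε) * volume (cube x r) ≤
      volume {y ∈ cube x r | δ * ⨍ z in cube x r, w z ≤ w y}

end

/-! For fixed `e`, `f = ⟨V e, e⟩` is a nonnegative scalar weight satisfying the reverse Hölder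
inequality on every cube. Jensen's inequality on `Q(x,r)`, monotonicity of `∫ f ^ p` in the domain
and the reverse Hölder inequality on `Q(x,R)` give
`∫_{Q(x,r)} f ≤ C_V (|Q(x,r)| / |Q(x,R)|) ^ (1 - 1/p) ∫_{Q(x,R)} f`, and
`|Q(x,r)| / |Q(x,R)| = (r/R) ^ n` turns the factor `r ^ (2-n)` into `(r/R) ^ (2 - n/p) R ^ (2-n)`. -/

section QuadraticForm

variable {d : ℕ}

lemma qf_eq_sum (A : Matrix (Fin d) (Fin d) ℝ) (e : Fin d → ℝ) :
    qf A e = ∑ i, ∑ j, e i * e j * A i j := by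
  simp only [qf, dotProduct, Matrix.mulVec, Finset.mul_sum]
  exact Finset.sum_congr rfl fun i _ => Finset.sum_congr rfl fun j _ => by ring

lemma qf_smul (c : ℝ) (A : Matrix (Fin d) (Fin d) ℝ) (e : Fin d → ℝ) :
    qf (c • A) e = c * qf A e := by
  simp only [qf, Matrix.smul_mulVec, dotProduct_smul, smul_eq_mul]

lemma qf_nonneg {A : Matrix (Fin d) (Fin d) ℝ} (hA : A.PosSemidef) (e : Fin d → ℝ) :
    0 ≤ qf A e := by
  simpa [qf] using hA.dotProduct_mulVec_nonneg e

lemma vnormSq_single (j : Fin d) : vnormSq (Pi.single j (1 : ℝ)) = 1 := by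
  simp [vnormSq, Pi.single_apply]

lemma bddAbove_matOpNorm_set (A : Matrix (Fin d) (Fin d) ℝ) :
    BddAbove {t : ℝ | ∃ e : Fin d → ℝ, vnormSq e = 1 ∧ t = Real.sqrt (vnormSq (A.mulVec e))} := by
  refine ⟨Real.sqrt (∑ j, (∑ i, |A j i|) ^ 2), ?_⟩
  rintro _ ⟨e, he, rfl⟩
  refine Real.sqrt_le_sqrt (Finset.sum_le_sum fun j _ => ?_)
  have habs : ∀ i, |e i| ≤ 1 := fun i => sq_le_one_iff_abs_le_one (e i) |>.mp <| by
    rw [← he]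
    exact Finset.single_le_sum (f := fun k => e k ^ 2) (fun k _ => sq_nonneg _) (Finset.mem_univ i)
  have hrow : |A.mulVec e j| ≤ ∑ i, |A j i| := by
    change |∑ i, A j i * e i| ≤ _
    refine (Finset.abs_sum_le_sum_abs _ _).trans (Finset.sum_le_sum fun i _ => ?_)
    rw [abs_mul]
    exact mul_le_of_le_one_right (abs_nonneg _) (habs i)
  simpa only [sq_abs] using pow_le_pow_left₀ (abs_nonneg _) hrow 2

lemma matOpNorm_nonneg (A : Matrix (Fin d) (Fin d) ℝ) : 0 ≤ matOpNorm A :=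
  Real.sSup_nonneg (by rintro _ ⟨e, -, rfl⟩; exact Real.sqrt_nonneg _)

lemma abs_apply_le_matOpNorm (A : Matrix (Fin d) (Fin d) ℝ) (i j : Fin d) :
    |A i j| ≤ matOpNorm A := by
  have hcol : A i j ^ 2 ≤ vnormSq (A.mulVec (Pi.single j 1)) := by
    have h := Finset.single_le_sum (f := fun k => A.mulVec (Pi.single j 1) k ^ 2)
      (fun k _ => sq_nonneg _) (Finset.mem_univ i)
    simpa [vnormSq, Matrix.mulVec_single] using h
  calc |A i j| = Real.sqrt (A i j ^ 2) := (Real.sqrt_sq_eq_abs _).symm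
    _ ≤ Real.sqrt (vnormSq (A.mulVec (Pi.single j 1))) := Real.sqrt_le_sqrt hcol
    _ ≤ matOpNorm A := le_csSup (bddAbove_matOpNorm_set A) ⟨_, vnormSq_single j, rfl⟩

lemma abs_qf_le_matOpNorm (A : Matrix (Fin d) (Fin d) ℝ) (e : Fin d → ℝ) :
    |qf A e| ≤ (∑ i, |e i|) ^ 2 * matOpNorm A := by
  rw [qf_eq_sum]
  calc |∑ i, ∑ j, e i * e j * A i j| ≤ ∑ i, ∑ j, |e i * e j * A i j| :=
        (Finset.abs_sum_le_sum_abs _ _).trans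
          (Finset.sum_le_sum fun i _ => Finset.abs_sum_le_sum_abs _ _)
    _ ≤ ∑ i, ∑ j, |e i| * |e j| * matOpNorm A := by
        gcongr with i _ j _
        rw [abs_mul, abs_mul]
        exact mul_le_mul_of_nonneg_left (abs_apply_le_matOpNorm A i j) (by positivity)
    _ = (∑ i, |e i|) ^ 2 * matOpNorm A := by
        rw [sq, Finset.sum_mul_sum, Finset.sum_mul]
        simp only [Finset.sum_mul]

end QuadraticForm

section MatrixIntegral

variable {n d : ℕ} {V : (Fin n → ℝ) → Matrix (Fin d) (Fin d) ℝ} {s : Set (Fin n → ℝ)}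

lemma integrableOn_apply_of_matOpNorm (hV : ∀ i j, Measurable fun y => V y i j)
    (hs : IntegrableOn (fun y => matOpNorm (V y)) s) (i j : Fin d) :
    IntegrableOn (fun y => V y i j) s :=
  hs.mono' (hV i j).aestronglyMeasurable
    (Filter.Eventually.of_forall fun y => abs_apply_le_matOpNorm (V y) i j)

lemma measurable_qf (hV : ∀ i j, Measurable fun y => V y i j) (e : Fin d → ℝ) :
    Measurable fun y => qf (V y) e := by
  simp only [qf_eq_sum]
  fun_prop

lemma integrableOn_qf (hV : ∀ i j, IntegrableOn (fun y => V y i j) s) (e : Fin d → ℝ) :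
    IntegrableOn (fun y => qf (V y) e) s := by
  simp only [qf_eq_sum]
  exact integrable_finsetSum _ fun i _ =>
    integrable_finsetSum _ fun j _ => (hV i j).const_mul _

lemma integrableOn_qf_rpow (hV : ∀ i j, Measurable fun y => V y i j) {p : ℝ} (hp : 0 ≤ p)
    (hs : IntegrableOn (fun y => matOpNorm (V y) ^ p) s) (e : Fin d → ℝ) :
    IntegrableOn (fun y => qf (V y) e ^ p) s := by
  refine (hs.const_mul (((∑ i, |e i|) ^ 2) ^ p)).mono'
    ((measurable_qf hV e).pow_const p).aestronglyMeasurable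
    (Filter.Eventually.of_forall fun y => ?_)
  calc ‖qf (V y) e ^ p‖ ≤ |qf (V y) e| ^ p := Real.abs_rpow_le_abs_rpow _ _
    _ ≤ ((∑ i, |e i|) ^ 2 * matOpNorm (V y)) ^ p := by
        gcongr
        exact abs_qf_le_matOpNorm (V y) e
    _ = ((∑ i, |e i|) ^ 2) ^ p * matOpNorm (V y) ^ p :=
        Real.mul_rpow (by positivity) (matOpNorm_nonneg _)

lemma qf_matInt (hV : ∀ i j, IntegrableOn (fun y => V y i j) s) (e : Fin d → ℝ) :
    qf (matInt V s) e = ∫ y in s, qf (V y) e := by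
  simp only [qf_eq_sum]
  rw [integral_finsetSum _ fun i _ => integrable_finsetSum _ fun j _ => (hV i j).const_mul _]
  refine Finset.sum_congr rfl fun i _ => ?_
  rw [integral_finsetSum _ fun j _ => (hV i j).const_mul _]
  refine Finset.sum_congr rfl fun j _ => ?_
  rw [integral_const_mul]
  rfl

lemma matAvg_eq_smul_matInt : matAvg V s = (volume.real s)⁻¹ • matInt V s := by
  ext i j
  simp [matAvg, matInt, setAverage_eq]

lemma qf_matAvg (hV : ∀ i j, IntegrableOn (fun y => V y i j) s) (e : Fin d → ℝ) :
    qf (matAvg V s) e = ⨍ y in s, qf (V y) e := by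
  rw [matAvg_eq_smul_matInt, qf_smul, qf_matInt hV, setAverage_eq, smul_eq_mul]

lemma qf_Psi {x : Fin n → ℝ} {r : ℝ} (hV : ∀ i j, IntegrableOn (fun y => V y i j) (cube x r))
    (e : Fin d → ℝ) : qf (Psi x r V) e = r ^ ((2 : ℝ) - n) * ∫ y in cube x r, qf (V y) e := by
  rw [Psi, qf_smul, qf_matInt hV]

end MatrixIntegral

section Cube

variable {n : ℕ} (x : Fin n → ℝ) {r R : ℝ}

lemma cube_eq_ball (hr : 0 < r) : cube x r = Metric.ball x r := by
  ext y
  simp [cube, Metric.mem_ball, dist_pi_lt_iff hr, Real.dist_eq]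

lemma cube_subset_cube (h : r ≤ R) : cube x r ⊆ cube x R :=
  fun _ hy i => (hy i).trans_le h

lemma volume_cube_ne_zero (hr : 0 < r) : volume (cube x r) ≠ 0 := by
  rw [cube_eq_ball x hr]
  exact (Metric.measure_ball_pos volume x hr).ne'

lemma volume_cube_ne_top (hr : 0 < r) : volume (cube x r) ≠ ⊤ := by
  rw [cube_eq_ball x hr]
  exact measure_ball_lt_top.ne

lemma measureReal_cube (hr : 0 < r) : volume.real (cube x r) = (2 * r) ^ n := by
  rw [measureReal_def, cube_eq_ball x hr, Real.volume_pi_ball x hr, Fintype.card_fin,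
    ENNReal.toReal_ofReal (by positivity)]

end Cube

section ReverseHolder

variable {α : Type*} [MeasurableSpace α] {μ : Measure α} {s t : Set α} {f : α → ℝ} {p C : ℝ}

lemma setAverage_le_of_reverseHolder (hp : 1 ≤ p) (hst : s ⊆ t) (hs : μ s ≠ 0) (ht : μ t ≠ ⊤)
    (hf : ∀ᵐ y ∂μ.restrict t, 0 ≤ f y) (hfs : IntegrableOn f s μ)
    (hfp : IntegrableOn (fun y => f y ^ p) t μ)
    (hRH : (⨍ y in t, f y ^ p ∂μ) ^ (1 / p) ≤ C * ⨍ y in t, f y ∂μ) :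
    ⨍ y in s, f y ∂μ ≤ (μ.real t / μ.real s) ^ (1 / p) * (C * ⨍ y in t, f y ∂μ) := by
  have hs_top : μ s ≠ ⊤ := measure_ne_top_of_subset hst ht
  have ha : 0 < μ.real s := ENNReal.toReal_pos hs hs_top
  have hb : 0 < μ.real t := ENNReal.toReal_pos (fun h => hs (measure_mono_null hst h)) ht
  have hfp0 : ∀ᵐ y ∂μ.restrict t, 0 ≤ f y ^ p := hf.mono fun y hy => Real.rpow_nonneg hy p
  have hfs0 : ∀ᵐ y ∂μ.restrict s, 0 ≤ f y := ae_restrict_of_ae_restrict_of_subset hst hf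
  have havg : 0 ≤ ⨍ y in s, f y ∂μ := by
    rw [setAverage_eq, smul_eq_mul]
    exact mul_nonneg (by positivity) (integral_nonneg_of_ae hfs0)
  have hjensen : (⨍ y in s, f y ∂μ) ^ p ≤ ⨍ y in s, f y ^ p ∂μ :=
    (convexOn_rpow hp).map_set_average_le (Real.continuous_rpow_const (by linarith)).continuousOn
      isClosed_Ici hs hs_top hfs0 hfs (hfp.mono_set hst)
  have hmono : ⨍ y in s, f y ^ p ∂μ ≤ μ.real t / μ.real s * ⨍ y in t, f y ^ p ∂μ := by
    rw [setAverage_eq, setAverage_eq, smul_eq_mul, smul_eq_mul]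
    calc (μ.real s)⁻¹ * ∫ y in s, f y ^ p ∂μ ≤ (μ.real s)⁻¹ * ∫ y in t, f y ^ p ∂μ :=
          mul_le_mul_of_nonneg_left (setIntegral_mono_set hfp hfp0 hst.eventuallyLE) (by positivity)
      _ = _ := by field_simp
  calc ⨍ y in s, f y ∂μ = ((⨍ y in s, f y ∂μ) ^ p) ^ (1 / p) := by
        rw [← Real.rpow_mul havg, mul_one_div_cancel (by linarith), Real.rpow_one]
    _ ≤ (μ.real t / μ.real s * ⨍ y in t, f y ^ p ∂μ) ^ (1 / p) := by
        gcongr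
        exact hjensen.trans hmono
    _ = (μ.real t / μ.real s) ^ (1 / p) * (⨍ y in t, f y ^ p ∂μ) ^ (1 / p) :=
        Real.mul_rpow (by positivity) (by
          rw [setAverage_eq, smul_eq_mul]
          exact mul_nonneg (by positivity) (integral_nonneg_of_ae hfp0))
    _ ≤ (μ.real t / μ.real s) ^ (1 / p) * (C * ⨍ y in t, f y ∂μ) := by gcongr

lemma setIntegral_le_of_reverseHolder (hp : 1 ≤ p) (hst : s ⊆ t) (hs : μ s ≠ 0) (ht : μ t ≠ ⊤)
    (hf : ∀ᵐ y ∂μ.restrict t, 0 ≤ f y) (hfs : IntegrableOn f s μ)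
    (hfp : IntegrableOn (fun y => f y ^ p) t μ)
    (hRH : (⨍ y in t, f y ^ p ∂μ) ^ (1 / p) ≤ C * ⨍ y in t, f y ∂μ) :
    ∫ y in s, f y ∂μ ≤ C * (μ.real s / μ.real t) ^ (1 - 1 / p) * ∫ y in t, f y ∂μ := by
  have ha : 0 < μ.real s := ENNReal.toReal_pos hs (measure_ne_top_of_subset hst ht)
  have hb : 0 < μ.real t := ENNReal.toReal_pos (fun h => hs (measure_mono_null hst h)) ht
  have havg := setAverage_le_of_reverseHolder hp hst hs ht hf hfs hfp hRH
  rw [setAverage_eq, setAverage_eq, smul_eq_mul, smul_eq_mul] at havg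
  have hratio : (μ.real s / μ.real t) ^ (1 - 1 / p)
      = μ.real s / μ.real t * ((μ.real t / μ.real s) ^ (1 / p)) := by
    rw [Real.rpow_sub (by positivity), Real.rpow_one, ← inv_div (μ.real s),
      Real.inv_rpow (by positivity), div_eq_mul_inv]
  calc ∫ y in s, f y ∂μ = μ.real s * ((μ.real s)⁻¹ * ∫ y in s, f y ∂μ) := by field_simp
    _ ≤ μ.real s * ((μ.real t / μ.real s) ^ (1 / p) * (C * ((μ.real t)⁻¹ * ∫ y in t, f y ∂μ))) :=
        mul_le_mul_of_nonneg_left havg ha.le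
    _ = C * (μ.real s / μ.real t) ^ (1 - 1 / p) * ∫ y in t, f y ∂μ := by
        rw [hratio]
        field_simp

end ReverseHolder

lemma rpow_two_sub_mul_cube_ratio {r R : ℝ} (hr : 0 < r) (hR : 0 < R) (n : ℕ) (p : ℝ) :
    r ^ ((2 : ℝ) - n) * ((2 * r) ^ n / (2 * R) ^ n) ^ (1 - 1 / p)
      = (r / R) ^ (2 - (n : ℝ) / p) * R ^ ((2 : ℝ) - n) := by
  have hrR : 0 < r / R := div_pos hr hR
  rw [← div_pow, mul_div_mul_left r R two_ne_zero, ← Real.rpow_natCast, ← Real.rpow_mul hrR.le,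
    show r ^ ((2 : ℝ) - n) = (r / R) ^ ((2 : ℝ) - n) * R ^ ((2 : ℝ) - n) by
      rw [Real.div_rpow hr.le hR.le, div_mul_cancel₀ _ (by positivity)],
    mul_right_comm, ← Real.rpow_add hrR]
  ring_nf

theorem statement2_general {n d : ℕ} (p C_V : ℝ) (hp : 1 < p)
    (V : (Fin n → ℝ) → Matrix (Fin d) (Fin d) ℝ)
    (hW : IsMatrixWeight V) (hBp : MemBp p C_V V) :
    ∀ (x : Fin n → ℝ) (r R : ℝ), 0 < r → r < R → ∀ e : Fin d → ℝ,
      qf (Psi x r V) e ≤ C_V * (r / R) ^ (2 - (n : ℝ) / p) * qf (Psi x R V) e := by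
  obtain ⟨hmeas, hpsd, hnorm⟩ := hW
  obtain ⟨hpow, hRH⟩ := hBp
  intro x r R hr hrR e
  have hR : 0 < R := hr.trans hrR
  have hentries : ∀ ρ, 0 < ρ → ∀ i j, IntegrableOn (fun y => V y i j) (cube x ρ) :=
    fun ρ hρ => integrableOn_apply_of_matOpNorm hmeas (hnorm x ρ hρ)
  have hnonneg : ∀ᵐ y ∂volume.restrict (cube x R), 0 ≤ qf (V y) e :=
    ae_restrict_of_ae (hpsd.mono fun y hy => qf_nonneg hy e)
  have hint := setIntegral_le_of_reverseHolder hp.le (cube_subset_cube x hrR.le)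
    (volume_cube_ne_zero x hr) (volume_cube_ne_top x hR) hnonneg
    (integrableOn_qf (hentries r hr) e) (integrableOn_qf_rpow hmeas (by linarith) (hpow x R hR) e)
    (by simpa only [qf_matAvg (hentries R hR)] using hRH x R hR e)
  rw [measureReal_cube x hr, measureReal_cube x hR] at hint
  rw [qf_Psi (hentries r hr), qf_Psi (hentries R hR)]
  calc r ^ ((2 : ℝ) - n) * ∫ y in cube x r, qf (V y) e
      ≤ r ^ ((2 : ℝ) - n) * (C_V * ((2 * r) ^ n / (2 * R) ^ n) ^ (1 - 1 / p)
          * ∫ y in cube x R, qf (V y) e) :=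
        mul_le_mul_of_nonneg_left hint (by positivity)
    _ = C_V * (r / R) ^ (2 - (n : ℝ) / p)
          * (R ^ ((2 : ℝ) - n) * ∫ y in cube x R, qf (V y) e) := by
        linear_combination
          (C_V * ∫ y in cube x R, qf (V y) e) * rpow_two_sub_mul_cube_ratio hr hR n p

theorem statement2 {n d : ℕ} (hn : 3 ≤ n) (hd : 1 ≤ d) (p C_V : ℝ) (hp : 1 < p)
    (hCV : 0 < C_V) (V : (Fin n → ℝ) → Matrix (Fin d) (Fin d) ℝ)
    (hW : IsMatrixWeight V) (hBp : MemBp p C_V V) :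
    ∀ (x : Fin n → ℝ) (r R : ℝ), 0 < r → r < R → ∀ e : Fin d → ℝ,
      qf (Psi x r V) e ≤ C_V * (r / R) ^ (2 - (n : ℝ) / p) * qf (Psi x R V) e :=
  statement2_general p C_V hp V hW hBp
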